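/- Let b : ℤ → ℚ with b(n) ≠ 0 for all n satisfy the lens recurrence b(n+1) = α·b(n) − b(n−1) + β for all n ∈ ℤ, together with the compatibility condition at some index, and let f : ℤ → ℚ with f(n) ≠ 0 for all n satisfy b(n) = f(n−1)·f(n) for all n. Then the vector (f(n+1), −f(n−1)) is an eigenvector of the matrix [[b(n+1), b(n+2)], [b(n−1), b(n)]] with eigenvalue β: for all n ∈ ℤ, b(n+1)·f(n+1) − b(n+2)·f(n−1) = β·f(n+1) and b(n−1)·f(n+1) − b(n)·f(n−1) = −β·f(n−1). -/

import Mathlib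

/-!
Along a lens sequence the defect `b n ^ 2 + b (n+1) ^ 2 - α b n b (n+1) - β (b n + b (n+1))`
is invariant under `n ↦ n + 1`, since its increment factors as `(b (n+2) - b n)` times the
recurrence. Vanishing at one index, it vanishes everywhere, and combined with the recurrence this
gives `b n * b (n+2) = b (n+1) * (b (n+1) - β)`. Writing `b` through an underground sequence `f`
and cancelling `f n * f (n+1)` yields `f (n-1) * f (n+2) = b (n+1) - β`, from which both
eigenvector equations are immediate.
-/

section LensSequence

variable {R : Type*} [CommRing R] (α β : R) (b : ℤ → R)

def lensDefect (n : ℤ) : R :=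
  b n ^ 2 + b (n + 1) ^ 2 - α * b n * b (n + 1) - β * (b n + b (n + 1))

variable {α β b}

lemma lensDefect_periodic (hrec : ∀ n : ℤ, b (n + 1) = α * b n - b (n - 1) + β) :
    Function.Periodic (lensDefect α β b) 1 := by
  intro n
  have h := hrec (n + 1)
  rw [add_sub_cancel_right] at h
  unfold lensDefect
  linear_combination (b (n + 1 + 1) - b n) * h

lemma lensDefect_eq_zero (hrec : ∀ n : ℤ, b (n + 1) = α * b n - b (n - 1) + β) {n₀ : ℤ}
    (hn₀ : lensDefect α β b n₀ = 0) (n : ℤ) : lensDefect α β b n = 0 := by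
  have hconst : ∀ m : ℤ, lensDefect α β b m = lensDefect α β b 0 := fun m => by
    simpa using (lensDefect_periodic hrec).int_mul_eq m
  rw [hconst, ← hconst n₀, hn₀]

lemma lens_mul_add_two {n : ℤ} (hrec : ∀ n : ℤ, b (n + 1) = α * b n - b (n - 1) + β)
    (hdefect : lensDefect α β b n = 0) :
    b n * b (n + 2) = b (n + 1) * (b (n + 1) - β) := by
  have h := hrec (n + 1)
  rw [add_sub_cancel_right, add_assoc n 1 1, one_add_one_eq_two] at h
  unfold lensDefect at hdefect
  linear_combination b n * h - hdefect

end LensSequence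

section Underground

variable {R : Type*} [CommRing R] [IsDomain R] {β : R} {b f : ℤ → R}

lemma underground_mul_add_three (hf : ∀ n : ℤ, f n ≠ 0)
    (hfac : ∀ n : ℤ, b n = f (n - 1) * f n) {n : ℤ}
    (hb : b n * b (n + 2) = b (n + 1) * (b (n + 1) - β)) :
    f (n - 1) * f (n + 2) = b (n + 1) - β := by
  have h1 : b (n + 1) = f n * f (n + 1) := by simpa using hfac (n + 1)
  have h2 : b (n + 2) = f (n + 1) * f (n + 2) := by
    simpa [show n + 2 - 1 = n + 1 by ring] using hfac (n + 2)
  refine mul_left_cancel₀ (mul_ne_zero (hf n) (hf (n + 1))) ?_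
  rw [hfac n, h2] at hb
  linear_combination hb + (b (n + 1) - β) * h1

end Underground

theorem underground_eigenvector_general
    (b : ℤ → ℚ) (α β : ℚ)
    (hrec : ∀ n : ℤ, b (n + 1) = α * b n - b (n - 1) + β)
    (n₀ : ℤ)
    (hcomp : (b n₀) ^ 2 + (b (n₀ + 1)) ^ 2
      = α * b n₀ * b (n₀ + 1) + β * (b n₀ + b (n₀ + 1)))
    (f : ℤ → ℚ) (hf : ∀ n : ℤ, f n ≠ 0)
    (hfac : ∀ n : ℤ, b n = f (n - 1) * f n) :
    ∀ n : ℤ, b (n + 1) * f (n + 1) - b (n + 2) * f (n - 1) = β * f (n + 1) ∧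
      b (n - 1) * f (n + 1) - b n * f (n - 1) = -β * f (n - 1) := by
  have hdefect : ∀ n, lensDefect α β b n = 0 :=
    lensDefect_eq_zero hrec (n₀ := n₀) (by unfold lensDefect; linear_combination hcomp)
  have hshift (n : ℤ) : f (n - 1) * f (n + 2) = b (n + 1) - β :=
    underground_mul_add_three hf hfac (lens_mul_add_two hrec (hdefect n))
  intro n
  have hprev := hshift (n - 1)
  rw [show n - 1 + 2 = n + 1 by ring, sub_add_cancel] at hprev
  have h0 : b (n - 1) = f (n - 1 - 1) * f (n - 1) := hfac (n - 1)
  have h2 : b (n + 2) = f (n + 1) * f (n + 2) := by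
    simpa [show n + 2 - 1 = n + 1 by ring] using hfac (n + 2)
  constructor
  · rw [h2]
    linear_combination -f (n + 1) * hshift n
  · rw [h0]
    linear_combination f (n - 1) * hprev

/-- If `f` is an underground sequence of a lens sequence `b`, then
`(f (n+1), -f (n-1))` is an eigenvector of `[[b (n+1), b (n+2)], [b (n-1), b n]]` with
eigenvalue `β`. -/
theorem underground_eigenvector
    (b : ℤ → ℚ) (α β : ℚ) (hb : ∀ n : ℤ, b n ≠ 0)
    (hrec : ∀ n : ℤ, b (n + 1) = α * b n - b (n - 1) + β)
    (n₀ : ℤ)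
    (hcomp : (b n₀) ^ 2 + (b (n₀ + 1)) ^ 2
      = α * b n₀ * b (n₀ + 1) + β * (b n₀ + b (n₀ + 1)))
    (f : ℤ → ℚ) (hf : ∀ n : ℤ, f n ≠ 0)
    (hfac : ∀ n : ℤ, b n = f (n - 1) * f n) :
    ∀ n : ℤ, b (n + 1) * f (n + 1) - b (n + 2) * f (n - 1) = β * f (n + 1) ∧
      b (n - 1) * f (n + 1) - b n * f (n - 1) = -β * f (n - 1) :=
  underground_eigenvector_general b α β hrec n₀ hcomp f hf hfac
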